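/- For u = y(αx+βy)/(βx+αy) and v = x(αx+βy)/(βx+αy), the Jacobian determinant of (u,v) with respect to (x,y) equals −((αx+βy)/(βx+αy))² = −uv/(xy). -/

import Mathlib

/-!
Since `v(α, β; x, y) = u(β, α; y, x)`, all four partial derivatives come from the two partials
of `u`, each a rational function over `(βx + αy)²`. With `s = x² + y²`, `p = xy`, the Jacobian
identity then reduces to `(αβ s + (α² + β²) p)² = (α² - β²)² p² + αβ (α s + 2β p)(β s + 2α p)`,
i.e. to `(α² - β²)² + 4α²β² = (α² + β²)²`.
-/

/-- First component of the Yang–Baxter map. -/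
noncomputable def ufun (α β x y : ℝ) : ℝ := y * (α * x + β * y) / (β * x + α * y)

/-- Second component of the Yang–Baxter map. -/
noncomputable def vfun (α β x y : ℝ) : ℝ := x * (α * x + β * y) / (β * x + α * y)

theorem vfun_eq_ufun_swap (α β x y : ℝ) : vfun α β x y = ufun β α y x := by
  rw [vfun, ufun, add_comm (β * y), add_comm (α * y)]

theorem ufun_mul_vfun (α β x y : ℝ) :
    ufun α β x y * vfun α β x y = x * y * ((α * x + β * y) / (β * x + α * y)) ^ 2 := by
  rw [ufun, vfun]
  ring

section Derivatives

variable {α β x y : ℝ}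

theorem hasDerivAt_ufun_left (hD : β * x + α * y ≠ 0) :
    HasDerivAt (fun t => ufun α β t y) ((α ^ 2 - β ^ 2) * y ^ 2 / (β * x + α * y) ^ 2) x := by
  have hnum := (((hasDerivAt_id' x).const_mul α).add_const (β * y)).const_mul y
  have hden := ((hasDerivAt_id' x).const_mul β).add_const (α * y)
  refine (hnum.fun_div hden hD).congr_deriv ?_
  field_simp
  ring

theorem hasDerivAt_ufun_right (hD : β * x + α * y ≠ 0) :
    HasDerivAt (fun t => ufun α β x t)
      (β * (α * (x ^ 2 + y ^ 2) + 2 * β * x * y) / (β * x + α * y) ^ 2) y := by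
  have hnum := (hasDerivAt_id' y).fun_mul (((hasDerivAt_id' y).const_mul β).const_add (α * x))
  have hden := ((hasDerivAt_id' y).const_mul α).const_add (β * x)
  refine (hnum.fun_div hden hD).congr_deriv ?_
  field_simp
  ring

end Derivatives

/-- The Jacobian determinant of `(u,v)` with respect to `(x,y)` equals
`−((αx+βy)/(βx+αy))² = −uv/(xy)`. -/
theorem collision_jacobian (α β x y : ℝ)
    (hα : 0 < α) (hβ : 0 < β) (hx : 0 < x) (hy : 0 < y) :
    deriv (fun t => ufun α β t y) x * deriv (fun t => vfun α β x t) y -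
      deriv (fun t => ufun α β x t) y * deriv (fun t => vfun α β t y) x =
    -((α * x + β * y) / (β * x + α * y)) ^ 2 ∧
    -((α * x + β * y) / (β * x + α * y)) ^ 2 =
      -(ufun α β x y * vfun α β x y) / (x * y) := by
  have hD : β * x + α * y ≠ 0 := by positivity
  have hD' : α * y + β * x ≠ 0 := by positivity
  constructor
  · simp only [vfun_eq_ufun_swap α β]
    rw [(hasDerivAt_ufun_left hD).deriv, (hasDerivAt_ufun_right hD).deriv,
      (hasDerivAt_ufun_left hD').deriv, (hasDerivAt_ufun_right hD').deriv]
    field_simp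
    ring
  · rw [ufun_mul_vfun]
    field_simp
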